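/- Let τ = {nop, inp, free}. The ESSP atom (k₁, m₀) of the TS A^τ_φ is τ-solvable if and only if φ has a one-in-three model. Moreover, if a τ-region (sup, sig) of A^τ_φ solves (k₁, m₀), then the set M = {X ∈ V(φ) : sig(X) = inp} is a one-in-three model of φ. -/
import Mathlib


/-- The eight Boolean interactions. -/
inductive Interaction : Type
  | nop | inp | out | set | res | swap | used | free
  deriving DecidableEq

/-- An interaction as a partial function on `Bool` (`0 = false`, `1 = true`). -/
def Interaction.app : Interaction → Bool → Option Bool
  | .nop, x => some x
  | .inp, x => if x then some false else none
  | .out, x => if x then none else some true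
  | .set, _ => some true
  | .res, _ => some false
  | .swap, x => some (!x)
  | .used, x => if x then some true else none
  | .free, x => if x then none else some false

/-- A transition system with states `S`, events `E` and a partial transition function. -/
structure TS (S E : Type) where
  delta : S → E → Option S

/-- The one-step reachability relation of a TS. -/
def TS.step {S E : Type} (A : TS S E) (s s' : S) : Prop :=
  ∃ e, A.delta s e = some s'

/-- A `τ`-region of a TS `A`. -/
structure Region {S E : Type} (A : TS S E) (τ : Set Interaction) where
  sup : S → Bool
  sig : E → Interaction
  sig_mem : ∀ e, sig e ∈ τ
  consistent : ∀ s e s', A.delta s e = some s' → (sig e).app (sup s) = some (sup s')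

/-- `A` has the `τ`-state-separation property. -/
def TS.hasSSP {S E : Type} (A : TS S E) (τ : Set Interaction) : Prop :=
  ∀ s s' : S, s ≠ s' → ∃ R : Region A τ, R.sup s ≠ R.sup s'

/-- `A` has the `τ`-event-state-separation property. -/
def TS.hasESSP {S E : Type} (A : TS S E) (τ : Set Interaction) : Prop :=
  ∀ (e : E) (s : S), A.delta s e = none → ∃ R : Region A τ, (R.sig e).app (R.sup s) = none

/-- A TS together with an initial state. -/
structure InitTS (S E : Type) extends TS S E where
  init : S

/-- Events of the reduction TS `A^τ_φ`: the key events `k₀, k₁`, one event per variable,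
and the fresh connector events `⊕₀,…,⊕ₘ` and `⊖₁,…,⊖ₘ` (where `ominus i` is `⊖_{i+1}`). -/
inductive Ev (m : ℕ) : Type
  | k0 | k1
  | X (v : Fin m)
  | oplus (i : Fin (m + 1))
  | ominus (i : Fin m)
  deriving DecidableEq

/-- States of the reduction TS `A^τ_φ`: `m₀, m₁, m₂` of the gadget `H`, the states
`t_{i,0},…,t_{i,5}` of the gadgets `Tᵢ`, and the connector states `⊥₀,…,⊥ₘ`. -/
inductive St (m : ℕ) : Type
  | m0 | m1 | m2
  | t (i : Fin m) (j : Fin 6)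
  | bot (i : Fin (m + 1))
  deriving DecidableEq

/-- The reduction TS `A^τ_φ` for the formula `φ` given by the clauses
`ζ i = {ζ i 0, ζ i 1, ζ i 2}`:
`m₀ --k₀--> m₁ --k₁--> m₂`;
`t_{i,0} --X (ζ i 0)--> t_{i,1} --X (ζ i 1)--> t_{i,2} --X (ζ i 2)--> t_{i,3} --k₁--> t_{i,4}`
and `t_{i,0} --k₀--> t_{i,5}`;
`⊥ᵢ --⊖_{i+1}--> ⊥_{i+1}`, `⊥ᵢ --⊕ᵢ--> t_{i,0}` (for `i < m`) and `⊥ₘ --⊕ₘ--> m₀`;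
initial state `⊥₀`. -/
def redTS (m : ℕ) (ζ : Fin m → Fin 3 → Fin m) : InitTS (St m) (Ev m) where
  delta := fun s e =>
    match s, e with
    | .m0, .k0 => some .m1
    | .m1, .k1 => some .m2
    | .t i j, .X v =>
        if j = (0 : Fin 6) ∧ ζ i 0 = v then some (.t i 1)
        else if j = (1 : Fin 6) ∧ ζ i 1 = v then some (.t i 2)
        else if j = (2 : Fin 6) ∧ ζ i 2 = v then some (.t i 3)
        else none
    | .t i j, .k1 => if j = (3 : Fin 6) then some (.t i 4) else none
    | .t i j, .k0 => if j = (0 : Fin 6) then some (.t i 5) else none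
    | .bot i, .ominus j => if i = j.castSucc then some (.bot j.succ) else none
    | .bot i, .oplus j =>
        if i = j then
          (if h : (j : ℕ) < m then some (.t ⟨(j : ℕ), h⟩ 0) else some .m0)
        else none
    | _, _ => none
  init := .bot 0

/-- `M` is a one-in-three model of `φ`: every clause contains exactly one variable of `M`. -/
def OneInThree (m : ℕ) (ζ : Fin m → Fin 3 → Fin m) (M : Set (Fin m)) : Prop :=
  ∀ i : Fin m, ∃! j : Fin 3, ζ i j ∈ M
/-- Auxiliary: step analysis for `τ = {nop, inp, free}`. -/
lemma step_cases_aux {σ : Interaction}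
    (hσ : σ ∈ ({Interaction.nop, Interaction.inp, Interaction.free} : Set Interaction))
    {a b : Bool} (h : σ.app a = some b) :
    (σ = .inp ∧ a = true ∧ b = false) ∨ (σ ≠ .inp ∧ a = b) := by
  simp only [Set.mem_insert_iff, Set.mem_singleton_iff] at hσ
  rcases hσ with h1 | h1 | h1 <;> subst h1 <;> cases a <;> simp_all [Interaction.app]

/-- Auxiliary: along a three-step chain from `true` to `false`, exactly one
signature is `inp`. -/
lemma chain3_aux {σ0 σ1 σ2 : Interaction}
    (h0 : σ0 ∈ ({Interaction.nop, Interaction.inp, Interaction.free} : Set Interaction))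
    (h1 : σ1 ∈ ({Interaction.nop, Interaction.inp, Interaction.free} : Set Interaction))
    (h2 : σ2 ∈ ({Interaction.nop, Interaction.inp, Interaction.free} : Set Interaction))
    {b1 b2 : Bool}
    (s0 : σ0.app true = some b1) (s1 : σ1.app b1 = some b2)
    (s2 : σ2.app b2 = some false) :
    (σ0 = .inp ∧ σ1 ≠ .inp ∧ σ2 ≠ .inp) ∨
    (σ0 ≠ .inp ∧ σ1 = .inp ∧ σ2 ≠ .inp) ∨
    (σ0 ≠ .inp ∧ σ1 ≠ .inp ∧ σ2 = .inp) := by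
  rcases step_cases_aux h0 s0 with ⟨e0, _, hb1⟩ | ⟨n0, hb1⟩ <;>
  rcases step_cases_aux h1 s1 with ⟨e1, hc1, hb2⟩ | ⟨n1, hb2⟩ <;>
  rcases step_cases_aux h2 s2 with ⟨e2, hc2, _⟩ | ⟨n2, hb3⟩ <;>
    subst_vars <;> first | simp_all | tauto

/-- For `τ = {nop, inp, free}` and a cubic monotone formula `φ` (clauses are
strictly increasing triples of variables, each variable occurring in exactly three
clauses), the ESSP atom `(k₁, m₀)` of `A^τ_φ` is `τ`-solvable iff `φ` has a one-in-three
model; moreover, any solving `τ`-region yields the model `{X : sig X = inp}`. -/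
theorem reduction_atom_iff_model (m : ℕ) (hm : 1 ≤ m)
    (ζ : Fin m → Fin 3 → Fin m)
    (hmono : ∀ i, StrictMono (ζ i))
    (hthree : ∀ v : Fin m, {i : Fin m | ∃ j : Fin 3, ζ i j = v}.ncard = 3) :
    ((∃ R : Region (redTS m ζ).toTS
        ({Interaction.nop, Interaction.inp, Interaction.free} : Set Interaction),
        (R.sig Ev.k1).app (R.sup St.m0) = none) ↔
      ∃ M : Set (Fin m), OneInThree m ζ M) ∧
    (∀ R : Region (redTS m ζ).toTS
        ({Interaction.nop, Interaction.inp, Interaction.free} : Set Interaction),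
      (R.sig Ev.k1).app (R.sup St.m0) = none →
      OneInThree m ζ {v : Fin m | R.sig (Ev.X v) = Interaction.inp}) := by
  classical
  have key : ∀ R : Region (redTS m ζ).toTS
        ({Interaction.nop, Interaction.inp, Interaction.free} : Set Interaction),
      (R.sig Ev.k1).app (R.sup St.m0) = none →
      OneInThree m ζ {v : Fin m | R.sig (Ev.X v) = Interaction.inp} := by
    intro R hR
    have c01 := R.consistent .m0 .k0 .m1 (by simp [redTS])
    have c12 := R.consistent .m1 .k1 .m2 (by simp [redTS])
    have hk1 := R.sig_mem .k1
    have hk0 := R.sig_mem .k0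
    simp only [Set.mem_insert_iff, Set.mem_singleton_iff] at hk0 hk1
    have main : R.sig .k1 = .free ∧ R.sup .m0 = true ∧ R.sig .k0 = .inp := by
      rcases hk0 with h0' | h0' | h0' <;> rcases hk1 with h1' | h1' | h1' <;>
        cases hsm0 : R.sup .m0 <;> cases hsm1 : R.sup .m1 <;>
          simp_all [Interaction.app]
    obtain ⟨hfree, hsupm0, hinp⟩ := main
    intro i
    have c0 := R.consistent (.t i 0) (.X (ζ i 0)) (.t i 1) (by simp [redTS])
    have c1 := R.consistent (.t i 1) (.X (ζ i 1)) (.t i 2) (by simp [redTS])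
    have c2 := R.consistent (.t i 2) (.X (ζ i 2)) (.t i 3) (by simp [redTS])
    have ck1 := R.consistent (.t i 3) .k1 (.t i 4) (by simp [redTS])
    have ck0 := R.consistent (.t i 0) .k0 (.t i 5) (by simp [redTS])
    rw [hfree] at ck1
    rw [hinp] at ck0
    have ht0 : R.sup (.t i 0) = true := by
      cases h : R.sup (.t i 0) <;> simp_all [Interaction.app]
    have ht3 : R.sup (.t i 3) = false := by
      cases h : R.sup (.t i 3) <;> simp_all [Interaction.app]
    rw [ht0] at c0
    rw [ht3] at c2
    have tri := chain3_aux (R.sig_mem _) (R.sig_mem _) (R.sig_mem _) c0 c1 c2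
    rcases tri with ⟨a, b, c⟩ | ⟨a, b, c⟩ | ⟨a, b, c⟩
    · refine ⟨0, a, ?_⟩
      intro y hy
      simp only [Set.mem_setOf_eq] at hy
      fin_cases y
      · rfl
      · exact absurd hy b
      · exact absurd hy c
    · refine ⟨1, b, ?_⟩
      intro y hy
      simp only [Set.mem_setOf_eq] at hy
      fin_cases y
      · exact absurd hy a
      · rfl
      · exact absurd hy c
    · refine ⟨2, c, ?_⟩
      intro y hy
      simp only [Set.mem_setOf_eq] at hy
      fin_cases y
      · exact absurd hy a
      · exact absurd hy b
      · rfl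
  refine ⟨⟨fun ⟨R, hR⟩ => ⟨_, key R hR⟩, ?_⟩, key⟩
  rintro ⟨M, hM⟩
  refine ⟨{ sup := fun s =>
              match s with
              | .m0 => true | .m1 => false | .m2 => false
              | .bot _ => true
              | .t i j =>
                  if j = (0 : Fin 6) then true
                  else if j = (1 : Fin 6) then decide (ζ i 0 ∉ M)
                  else if j = (2 : Fin 6) then decide (ζ i 0 ∉ M ∧ ζ i 1 ∉ M)
                  else false,
            sig := fun e =>
              match e with
              | .k0 => .inp | .k1 => .free
              | .X v => if v ∈ M then .inp else .nop
              | .oplus _ => .nop | .ominus _ => .nop,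
            sig_mem := ?_, consistent := ?_ }, rfl⟩
  · intro e
    cases e with
    | X v => by_cases h : v ∈ M <;> simp [h]
    | _ => simp
  · intro s e s' h
    cases s with
    | m0 =>
      cases e <;> simp [redTS] at h
      subst h; simp [Interaction.app]
    | m1 =>
      cases e <;> simp [redTS] at h
      subst h; simp [Interaction.app]
    | m2 => cases e <;> simp [redTS] at h
    | t i j =>
      cases e with
      | k0 =>
        simp only [redTS] at h
        split_ifs at h with hj
        injection h with h
        subst hj; subst h
        simp [Interaction.app]
      | k1 =>
        simp only [redTS] at h
        split_ifs at h with hj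
        injection h with h
        subst hj; subst h
        simp [Interaction.app]
      | X v =>
        simp only [redTS] at h
        split_ifs at h with h1 h2 h3
        · obtain ⟨hj, hv⟩ := h1
          injection h with h
          subst hj; subst hv; subst h
          by_cases hm0 : ζ i 0 ∈ M <;> simp [hm0, Interaction.app]
        · obtain ⟨hj, hv⟩ := h2
          injection h with h
          subst hj; subst hv; subst h
          obtain ⟨j₀, hj₀, hu⟩ := hM i
          by_cases hm0 : ζ i 0 ∈ M <;> by_cases hm1 : ζ i 1 ∈ M <;>
            simp [hm0, hm1, Interaction.app]
          exact absurd ((hu 0 hm0).trans (hu 1 hm1).symm) (by decide)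
        · obtain ⟨hj, hv⟩ := h3
          injection h with h
          subst hj; subst hv; subst h
          obtain ⟨j₀, hj₀, hu⟩ := hM i
          by_cases hm2 : ζ i 2 ∈ M
          · have hn0 : ζ i 0 ∉ M := fun hc =>
              absurd ((hu 0 hc).trans (hu 2 hm2).symm) (by decide)
            have hn1 : ζ i 1 ∉ M := fun hc =>
              absurd ((hu 1 hc).trans (hu 2 hm2).symm) (by decide)
            simp [hm2, hn0, hn1, Interaction.app]
          · have hor : ζ i 0 ∈ M ∨ ζ i 1 ∈ M := by
              fin_cases j₀
              · exact Or.inl hj₀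
              · exact Or.inr hj₀
              · exact absurd hj₀ hm2
            rcases hor with h' | h' <;> simp [hm2, h', Interaction.app]
      | oplus => simp [redTS] at h
      | ominus => simp [redTS] at h
    | bot i =>
      cases e with
      | oplus j =>
        simp only [redTS] at h
        split_ifs at h with h1 h2 <;> injection h with h <;> subst h <;>
          simp [Interaction.app]
      | ominus j =>
        simp only [redTS] at h
        split_ifs at h with h1
        injection h with h
        subst h
        simp [Interaction.app]
      | _ => simp [redTS] at h
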